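/- arXiv:1205.4482 — 6 statements merged into one kernel-verified Lean document; each statement's English description precedes it below -/
import Mathlib

section
/- Let X be a real Banach space and A : X ⇉ X* a maximally monotone operator. Then the norm closure of the convex hull of dom A equals the norm closure of the projection onto X of the domain of the Fitzpatrick function of A: cl(conv(dom A)) = cl(P_X[dom F_A]). -/
/-!
Monotonicity gives `F_A(a, a*) ≤ ⟨a, a*⟩` on `gra A`, so `dom A ⊆ P_X[dom F_A]`, and `dom F_A`
is convex because `F_A` is a supremum of affine functions; this gives `⊆`. Conversely, let
`(x, x*) ∈ dom F_A` and let `f ∈ X*` be bounded by `u` on `dom A`. If `f x > u`, then no pair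
`(x, x* + n f)` lies in `gra A`, so by maximality each is monotonically unrelated to some point of
`gra A`; the finiteness of `F_A(x, x*)` turns this into `n (f x - u) < F_A(x, x*) - ⟨x, x*⟩` for
all `n`, which is absurd. Hence every functional bounded on `dom A` has the same bound on
`P_X[dom F_A]`, and Hahn–Banach separation gives `⊇`.
-/

open Set

noncomputable section

variable {X : Type*}

/-- The domain of a set-valued operator `A : X ⇉ X*`, identified with its graph. -/
def opDom [NormedAddCommGroup X] [NormedSpace ℝ X]
    (A : Set (X × (X →L[ℝ] ℝ))) : Set X := Prod.fst '' A

/-- The range of a set-valued operator. -/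
def opRan [NormedAddCommGroup X] [NormedSpace ℝ X]
    (A : Set (X × (X →L[ℝ] ℝ))) : Set (X →L[ℝ] ℝ) := Prod.snd '' A

/-- `(x, x*)` is monotonically related to the set `S ⊆ X × X*`:
`⟨x − y, x* − y*⟩ ≥ 0` for all `(y, y*) ∈ S`. -/
def MonRel [NormedAddCommGroup X] [NormedSpace ℝ X]
    (p : X × (X →L[ℝ] ℝ)) (S : Set (X × (X →L[ℝ] ℝ))) : Prop :=
  ∀ q ∈ S, 0 ≤ (p.2 - q.2) (p.1 - q.1)

/-- `A` is a monotone operator (identified with its graph). -/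
def IsMonotoneOp [NormedAddCommGroup X] [NormedSpace ℝ X]
    (A : Set (X × (X →L[ℝ] ℝ))) : Prop :=
  ∀ p ∈ A, MonRel p A

/-- `A` is maximally monotone: it is monotone and every monotonically related
pair already belongs to the graph. -/
def IsMaxMonotoneOp [NormedAddCommGroup X] [NormedSpace ℝ X]
    (A : Set (X × (X →L[ℝ] ℝ))) : Prop :=
  IsMonotoneOp A ∧ ∀ p : X × (X →L[ℝ] ℝ), MonRel p A → p ∈ A

/-- The Fitzpatrick function of `A`, with values in `(-∞, +∞]` (modeled in `EReal`):
`F_A(x, x*) = sup_{(a,a*) ∈ A} (⟨a, x*⟩ + ⟨x, a*⟩ − ⟨a, a*⟩)`. -/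
def fitz [NormedAddCommGroup X] [NormedSpace ℝ X]
    (A : Set (X × (X →L[ℝ] ℝ))) (x : X) (x' : X →L[ℝ] ℝ) : EReal :=
  ⨆ a ∈ A, ((x' a.1 + a.2 x - a.2 a.1 : ℝ) : EReal)

/-- The domain of the Fitzpatrick function: the set of pairs where `F_A < +∞`. -/
def fitzDom [NormedAddCommGroup X] [NormedSpace ℝ X]
    (A : Set (X × (X →L[ℝ] ℝ))) : Set (X × (X →L[ℝ] ℝ)) :=
  {q | fitz A q.1 q.2 < ⊤}

/-- `J_p(x) = (1/p) ∂‖·‖^p (x)`, the subdifferential at `x` of `y ↦ ‖y‖^p / p`. -/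
def Jmap [NormedAddCommGroup X] [NormedSpace ℝ X]
    (p : ℝ) (x : X) : Set (X →L[ℝ] ℝ) :=
  {x' | ∀ y : X, x' (y - x) + ‖x‖ ^ p / p ≤ ‖y‖ ^ p / p}

/-- The graph of the operator `A + λ J_p(· − z)`. -/
def sumGraph [NormedAddCommGroup X] [NormedSpace ℝ X]
    (A : Set (X × (X →L[ℝ] ℝ))) (lam p : ℝ) (z : X) :
    Set (X × (X →L[ℝ] ℝ)) :=
  {q | ∃ a' b' : X →L[ℝ] ℝ, (q.1, a') ∈ A ∧ b' ∈ Jmap p (q.1 - z) ∧ q.2 = a' + lam • b'}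

section

variable [NormedAddCommGroup X] [NormedSpace ℝ X] {A : Set (X × (X →L[ℝ] ℝ))}

lemma fitz_le_coe_iff {x : X} {x' : X →L[ℝ] ℝ} {M : ℝ} :
    fitz A x x' ≤ M ↔ ∀ a ∈ A, x' a.1 + a.2 x - a.2 a.1 ≤ M := by
  simp only [fitz, iSup₂_le_iff, EReal.coe_le_coe_iff]

lemma mem_fitzDom_iff {q : X × (X →L[ℝ] ℝ)} :
    q ∈ fitzDom A ↔ ∃ M : ℝ, ∀ a ∈ A, q.2 a.1 + a.2 q.1 - a.2 a.1 ≤ M := by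
  refine ⟨fun hq => ?_, fun ⟨M, hM⟩ => (fitz_le_coe_iff.2 hM).trans_lt (EReal.coe_lt_top M)⟩
  obtain ⟨M, hM, -⟩ := EReal.lt_iff_exists_real_btwn.1 hq
  exact ⟨M, fitz_le_coe_iff.1 hM.le⟩

lemma IsMonotoneOp.fitz_le_apply (hA : IsMonotoneOp A) {p : X × (X →L[ℝ] ℝ)} (hp : p ∈ A) :
    fitz A p.1 p.2 ≤ (p.2 p.1 : ℝ) := by
  refine fitz_le_coe_iff.2 fun a ha => ?_
  have := hA p hp a ha
  simp only [sub_apply, map_sub] at this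
  linarith

lemma IsMonotoneOp.opDom_subset_fst_fitzDom (hA : IsMonotoneOp A) :
    opDom A ⊆ Prod.fst '' fitzDom A := by
  rintro _ ⟨p, hp, rfl⟩
  exact ⟨p, (hA.fitz_le_apply hp).trans_lt (EReal.coe_lt_top _), rfl⟩

lemma convex_fitzDom : Convex ℝ (fitzDom A) := by
  intro p hp q hq t s ht hs hts
  obtain ⟨M, hM⟩ := mem_fitzDom_iff.1 hp
  obtain ⟨N, hN⟩ := mem_fitzDom_iff.1 hq
  refine mem_fitzDom_iff.2 ⟨t * M + s * N, fun a ha => ?_⟩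
  have hpa := mul_le_mul_of_nonneg_left (hM a ha) ht
  have hqa := mul_le_mul_of_nonneg_left (hN a ha) hs
  have hsplit : a.2 a.1 = t * a.2 a.1 + s * a.2 a.1 := by rw [← add_mul, hts, one_mul]
  simp only [Prod.fst_add, Prod.snd_add, Prod.smul_fst, Prod.smul_snd, add_apply, smul_apply,
    map_add, map_smul, smul_eq_mul]
  linarith

lemma IsMaxMonotoneOp.apply_le_of_mem_fitzDom (hA : IsMaxMonotoneOp A)
    {q : X × (X →L[ℝ] ℝ)} (hq : q ∈ fitzDom A) (f : X →L[ℝ] ℝ) {u : ℝ}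
    (hf : ∀ a ∈ A, f a.1 ≤ u) : f q.1 ≤ u := by
  obtain ⟨x, x'⟩ := q
  obtain ⟨M, hM⟩ := mem_fitzDom_iff.1 hq
  by_contra! hux
  obtain ⟨n, hn⟩ := exists_nat_gt ((M - x' x) / (f x - u))
  have hn' : M - x' x < n * (f x - u) := (div_lt_iff₀ (sub_pos.2 hux)).1 hn
  have hnA : (x, x' + (n : ℝ) • f) ∉ A := fun h => (hf _ h).not_gt hux
  obtain ⟨b, hbA, hb⟩ : ∃ b ∈ A, (x' + (n : ℝ) • f - b.2) (x - b.1) < 0 := by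
    by_contra! h
    exact hnA (hA.2 _ h)
  have hfb : (n : ℝ) * (f x - u) ≤ n * (f x - f b.1) :=
    mul_le_mul_of_nonneg_left (by linarith [hf b hbA]) n.cast_nonneg
  have hMb := hM b hbA
  simp only [sub_apply, add_apply, smul_apply, map_sub, smul_eq_mul] at hb hMb
  linarith

lemma IsMaxMonotoneOp.fst_fitzDom_subset_closure_convexHull (hA : IsMaxMonotoneOp A) :
    Prod.fst '' fitzDom A ⊆ closure (convexHull ℝ (opDom A)) := by
  rintro _ ⟨q, hq, rfl⟩
  by_contra hq₁
  obtain ⟨f, u, hfu, huq⟩ := geometric_hahn_banach_closed_point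
    (convex_convexHull ℝ (opDom A)).closure isClosed_closure hq₁
  have hf : ∀ a ∈ A, f a.1 ≤ u := fun a ha =>
    (hfu _ (subset_closure (subset_convexHull ℝ _ ⟨a, ha, rfl⟩))).le
  exact (hA.apply_le_of_mem_fitzDom hq f hf).not_gt huq

end

theorem closure_convexHull_dom_eq_closure_proj_fitzDom_general
    [NormedAddCommGroup X] [NormedSpace ℝ X]
    (A : Set (X × (X →L[ℝ] ℝ))) (hA : IsMaxMonotoneOp A) :
    closure (convexHull ℝ (opDom A)) = closure (Prod.fst '' fitzDom A) := by
  have hconv : Convex ℝ (Prod.fst '' fitzDom A) :=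
    (convex_fitzDom (A := A)).linear_image (LinearMap.fst ℝ _ _)
  refine Subset.antisymm ?_ (closure_minimal hA.fst_fitzDom_subset_closure_convexHull
    isClosed_closure)
  exact closure_mono (convexHull_min hA.1.opDom_subset_fst_fitzDom hconv)

/-- Theorem (Borwein–Yao): for a maximally monotone operator `A` on a real Banach
space, `cl(conv(dom A)) = cl(P_X[dom F_A])`. -/
theorem closure_convexHull_dom_eq_closure_proj_fitzDom
    [NormedAddCommGroup X] [NormedSpace ℝ X] [CompleteSpace X]
    (A : Set (X × (X →L[ℝ] ℝ))) (hA : IsMaxMonotoneOp A) :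
    closure (convexHull ℝ (opDom A)) = closure (Prod.fst '' fitzDom A) :=
  closure_convexHull_dom_eq_closure_proj_fitzDom_general A hA
end
end

section
/- Let X be a real Banach space and A : X ⇉ X* a maximally monotone operator of type (FPV). Then cl(dom A) = cl(conv(dom A)) = cl(P_X[dom F_A]); in particular dom A is nearly convex (its closure is convex). -/
open Set

noncomputable section

variable {X : Type*}

/-! The Fitzpatrick function is a supremum of continuous affine functions, so the projection
of its domain is convex; by monotonicity it contains `dom A`. Conversely, let `F_A(z, z*) < ∞`
and suppose `z` is at distance `3r > 0` from `dom A`. Pick `b ∈ dom A`, a norming functional `u`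
of `z - b`, and the open convex set `U = {x | dist x [z, b] < r}`. Every `a ∈ U ∩ dom A`
satisfies `u (z - a) ≥ r`, so for `c` large the pair `(z, z* + c u)` is monotonically related to
`A` over `U`; (FPV) then puts `z` in `dom A`, a contradiction. Hence
`dom A ⊆ conv (dom A) ⊆ P_X[dom F_A] ⊆ cl (dom A)`. -/

def IsTypeFPV [NormedAddCommGroup X] [NormedSpace ℝ X] (A : Set (X × (X →L[ℝ] ℝ))) : Prop :=
  ∀ U : Set X, IsOpen U → Convex ℝ U → (U ∩ opDom A).Nonempty →
    ∀ q : X × (X →L[ℝ] ℝ), q.1 ∈ U → MonRel q (A ∩ (U ×ˢ (univ : Set (X →L[ℝ] ℝ)))) → q ∈ A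

theorem le_apply_sub_of_mem_thickening_segment {E : Type*} [NormedAddCommGroup E]
    [NormedSpace ℝ E] {u : E →L[ℝ] ℝ} {z b a : E} {r : ℝ} (hu : ‖u‖ ≤ 1)
    (huzb : u (z - b) = ‖z - b‖) (ha : a ∈ Metric.thickening r (segment ℝ z b))
    (hza : 3 * r ≤ dist z a) : r ≤ u (z - a) := by
  obtain ⟨s, hs, hsa⟩ := Metric.mem_thickening_iff.1 ha
  rw [segment_eq_image'] at hs
  obtain ⟨β, ⟨hβ, -⟩, rfl⟩ := hs
  have hzs : z - (z + β • (b - z)) = β • (z - b) := by module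
  have hus : |u (z + β • (b - z) - a)| < r := by
    calc |u (z + β • (b - z) - a)| ≤ 1 * ‖z + β • (b - z) - a‖ := u.le_of_opNorm_le hu _
      _ < r := by rwa [one_mul, ← dist_eq_norm, dist_comm]
  have hdist : dist z a ≤ β * ‖z - b‖ + dist (z + β • (b - z)) a := by
    calc dist z a ≤ dist z (z + β • (b - z)) + dist (z + β • (b - z)) a := dist_triangle _ _ _
      _ = β * ‖z - b‖ + dist (z + β • (b - z)) a := by
        rw [dist_eq_norm z, hzs, norm_smul, Real.norm_of_nonneg hβ]
  have hsplit : u (z - a) = β * ‖z - b‖ + u (z + β • (b - z) - a) := by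
    rw [← smul_eq_mul, ← huzb, ← map_smul, ← hzs, ← map_add]
    congr 1
    abel
  rw [hsplit]
  linarith [abs_lt.1 hus, dist_comm a (z + β • (b - z))]

section

variable [NormedAddCommGroup X] [NormedSpace ℝ X] {A : Set (X × (X →L[ℝ] ℝ))}

theorem IsMaxMonotoneOp.nonempty (hA : IsMaxMonotoneOp A) : A.Nonempty :=
  A.eq_empty_or_nonempty.elim (fun h => ⟨0, hA.2 0 (by simp [MonRel, h])⟩) id

theorem coe_le_fitz {z : X} {z' : X →L[ℝ] ℝ} {q : X × (X →L[ℝ] ℝ)} (hq : q ∈ A) :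
    ((z' q.1 + q.2 z - q.2 q.1 : ℝ) : EReal) ≤ fitz A z z' :=
  le_iSup₂ (f := fun a (_ : a ∈ A) => ((z' a.1 + a.2 z - a.2 a.1 : ℝ) : EReal)) q hq

theorem le_toReal_fitz {z : X} {z' : X →L[ℝ] ℝ} {q : X × (X →L[ℝ] ℝ)} (h : fitz A z z' < ⊤)
    (hq : q ∈ A) : z' q.1 + q.2 z - q.2 q.1 ≤ (fitz A z z').toReal :=
  EReal.coe_le_coe_iff.1 ((coe_le_fitz hq).trans (EReal.le_coe_toReal h.ne))

theorem IsMonotoneOp.subset_fitzDom (hA : IsMonotoneOp A) : A ⊆ fitzDom A := by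
  intro p hp
  refine lt_of_le_of_lt (iSup₂_le fun q hq => ?_) (EReal.coe_lt_top (p.2 p.1))
  have hpq := hA p hp q hq
  simp only [sub_apply, map_sub] at hpq
  exact EReal.coe_le_coe_iff.2 (by linarith)

theorem convex_image_fst_fitzDom : Convex ℝ (Prod.fst '' fitzDom A) := by
  rintro _ ⟨p, hp, rfl⟩ _ ⟨q, hq, rfl⟩ s t hs ht hst
  refine ⟨s • p + t • q, ?_, rfl⟩
  refine lt_of_le_of_lt (iSup₂_le fun a ha => ?_)
    (EReal.coe_lt_top (s * (fitz A p.1 p.2).toReal + t * (fitz A q.1 q.2).toReal))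
  have hpa := mul_le_mul_of_nonneg_left (le_toReal_fitz hp ha) hs
  have hqa := mul_le_mul_of_nonneg_left (le_toReal_fitz hq ha) ht
  refine EReal.coe_le_coe_iff.2 ?_
  simp only [Prod.fst_add, Prod.snd_add, Prod.smul_fst, Prod.smul_snd, add_apply, smul_apply,
    map_add, map_smul, smul_eq_mul]
  linear_combination hpa + hqa + a.2 a.1 * hst

theorem IsTypeFPV.mem_closure_opDom (hfpv : IsTypeFPV A) (hne : A.Nonempty) {z : X}
    {z' : X →L[ℝ] ℝ} (h : fitz A z z' < ⊤) : z ∈ closure (opDom A) := by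
  by_contra hz
  obtain ⟨d, hd, hdist⟩ : ∃ d > 0, ∀ a ∈ opDom A, d ≤ dist z a := by
    simpa [Metric.mem_closure_iff] using hz
  obtain ⟨p, hp⟩ := hne
  obtain ⟨u, hu, huzb⟩ := exists_dual_vector'' ℝ (z - p.1)
  obtain ⟨r, hr, rfl⟩ : ∃ r > 0, d = 3 * r := ⟨d / 3, by positivity, by ring⟩
  set K := (fitz A z z').toReal - z' z
  set c := max K 0 / r
  have hcr : c * r = max K 0 := div_mul_cancel₀ _ hr.ne'
  refine hz (subset_closure ⟨(z, z' + c • u), hfpv _ Metric.isOpen_thickening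
    ((convex_segment z p.1).thickening r)
    ⟨p.1, Metric.self_subset_thickening hr _ (right_mem_segment ℝ z p.1), p, hp, rfl⟩
    (z, z' + c • u) (Metric.self_subset_thickening hr _ (left_mem_segment ℝ z p.1)) ?_, rfl⟩)
  rintro q ⟨hqA, hqU, -⟩
  have hru : r ≤ u (z - q.1) := le_apply_sub_of_mem_thickening_segment hu huzb hqU
    (hdist q.1 ⟨q, hqA, rfl⟩)
  have hK : K ≤ c * u (z - q.1) :=
    (le_max_left K 0).trans (hcr ▸ mul_le_mul_of_nonneg_left hru (by positivity))
  have hfz := le_toReal_fitz h hqA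
  simp only [sub_apply, add_apply, smul_apply, map_sub, smul_eq_mul] at hK ⊢
  linarith

end

theorem closure_eq_closure_of_subset_of_subset_closure {Y : Type*} [TopologicalSpace Y]
    {s t : Set Y} (hst : s ⊆ t) (hts : t ⊆ closure s) : closure s = closure t :=
  (closure_mono hst).antisymm (closure_minimal hts isClosed_closure)

theorem nearly_convex_of_FPV_general
    [NormedAddCommGroup X] [NormedSpace ℝ X]
    (A : Set (X × (X →L[ℝ] ℝ))) (hA : IsMaxMonotoneOp A)
    (hfpv : ∀ U : Set X, IsOpen U → Convex ℝ U → (U ∩ opDom A).Nonempty →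
      ∀ q : X × (X →L[ℝ] ℝ), q.1 ∈ U →
        MonRel q (A ∩ (U ×ˢ (univ : Set (X →L[ℝ] ℝ)))) → q ∈ A) :
    closure (opDom A) = closure (convexHull ℝ (opDom A)) ∧
    closure (opDom A) = closure (Prod.fst '' fitzDom A) ∧
    Convex ℝ (closure (opDom A)) := by
  have hdom : opDom A ⊆ Prod.fst '' fitzDom A := image_mono hA.1.subset_fitzDom
  have hproj : Prod.fst '' fitzDom A ⊆ closure (opDom A) := by
    rintro _ ⟨p, hp, rfl⟩
    exact IsTypeFPV.mem_closure_opDom hfpv hA.nonempty hp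
  have hhull : convexHull ℝ (opDom A) ⊆ Prod.fst '' fitzDom A :=
    convexHull_min hdom convex_image_fst_fitzDom
  have hclosure_hull := closure_eq_closure_of_subset_of_subset_closure
    (subset_convexHull ℝ _) (hhull.trans hproj)
  exact ⟨hclosure_hull, closure_eq_closure_of_subset_of_subset_closure hdom hproj,
    hclosure_hull ▸ (convex_convexHull ℝ _).closure⟩

/-- Corollary: if `A` is maximally monotone of type (FPV), then
`cl(dom A) = cl(conv(dom A)) = cl(P_X[dom F_A])`; in particular `dom A` is nearly
convex. -/
theorem nearly_convex_of_FPV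
    [NormedAddCommGroup X] [NormedSpace ℝ X] [CompleteSpace X]
    (A : Set (X × (X →L[ℝ] ℝ))) (hA : IsMaxMonotoneOp A)
    (hfpv : ∀ U : Set X, IsOpen U → Convex ℝ U → (U ∩ opDom A).Nonempty →
      ∀ q : X × (X →L[ℝ] ℝ), q.1 ∈ U →
        MonRel q (A ∩ (U ×ˢ (univ : Set (X →L[ℝ] ℝ)))) → q ∈ A) :
    closure (opDom A) = closure (convexHull ℝ (opDom A)) ∧
    closure (opDom A) = closure (Prod.fst '' fitzDom A) ∧
    Convex ℝ (closure (opDom A)) :=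
  nearly_convex_of_FPV_general A hA hfpv
end
end

section
/- Let X be a real Banach space and A : X ⇉ X* a maximally monotone operator with int(dom A) ≠ ∅. Then cl(dom A) = cl(conv(dom A)) = cl(P_X[dom F_A]); in particular dom A is nearly convex (its closure is convex). -/
open Set

noncomputable section

variable {X : Type*}

/-! Monotonicity makes every convex combination of the points `(b, ⟨b*, b - y⟩)`, `(b, b*) ∈ A`,
that lies over `y` have nonnegative height, because
`∑ wᵢ ⟨bᵢ*, bᵢ - y⟩ = ½ ∑ wᵢ wⱼ ⟨bᵢ* - bⱼ*, bᵢ - bⱼ⟩` when `y = ∑ wⱼ bⱼ`. If `y` is interior to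
`conv (dom A)` and `A` is bounded on some ball (Baire's theorem provides one), this convex hull is
bounded above near `y`, so a Hahn–Banach separation gives `y*` with `⟨y*, b - y⟩ ≤ ⟨b*, b - y⟩` on
`A`; by maximality `(y, y*) ∈ A`. Thus `int conv (dom A) ⊆ dom A`, whence
`cl (dom A) = cl conv (dom A)`. Finally, if `F_A(z, u) < ∞` but `z ∉ cl conv (dom A)`, adding a
large multiple of a functional separating `z` from `conv (dom A)` to `u` makes the pair
monotonically related to `A`, contradicting maximality. -/

open Metric Filter Topology
open scoped Pointwise

theorem exists_interior_inter_nonempty_of_subset_iUnion {Y ι : Type*} [TopologicalSpace Y]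
    [BaireSpace Y] [Countable ι] {U : Set Y} (hU : IsOpen U) (hne : U.Nonempty)
    {C : ι → Set Y} (hC : ∀ i, IsClosed (C i)) (hcover : U ⊆ ⋃ i, C i) :
    ∃ i, (interior (C i) ∩ U).Nonempty := by
  have hdense : Dense (⋃ i, interior (C i ∪ Uᶜ)) := by
    refine dense_iUnion_interior_of_closed (fun i => (hC i).union hU.isClosed_compl) ?_
    refine eq_univ_of_forall fun x => ?_
    by_cases hx : x ∈ U
    · obtain ⟨i, hi⟩ := mem_iUnion.mp (hcover hx)
      exact mem_iUnion.mpr ⟨i, Or.inl hi⟩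
    · obtain ⟨i, -⟩ := mem_iUnion.mp (hcover hne.some_mem)
      exact mem_iUnion.mpr ⟨i, Or.inr hx⟩
  obtain ⟨x, hxU, hx⟩ := hdense.inter_open_nonempty U hU hne
  obtain ⟨i, hi⟩ := mem_iUnion.mp hx
  have hsub : interior (C i ∪ Uᶜ) ∩ U ⊆ C i := fun y hy =>
    (interior_subset hy.1).resolve_right (not_not.mpr hy.2)
  exact ⟨i, x, interior_maximal hsub (isOpen_interior.inter hU) ⟨hi, hxU⟩, hxU⟩

theorem sum_mul_apply_sub_sum_smul_nonneg {ι E : Type*} [Fintype ι] [AddCommGroup E]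
    [Module ℝ E] {w : ι → ℝ} (hw₀ : ∀ i, 0 ≤ w i) (hw₁ : ∑ i, w i = 1) {x : ι → E}
    {f : ι → E →ₗ[ℝ] ℝ} (hf : ∀ i j, 0 ≤ (f i - f j) (x i - x j)) :
    0 ≤ ∑ i, w i * f i (x i - ∑ j, w j • x j) := by
  have hexp : ∀ i, f i (x i - ∑ j, w j • x j) = ∑ j, w j * f i (x i - x j) := by
    intro i
    simp only [map_sub, map_sum, map_smul, smul_eq_mul, mul_sub, Finset.sum_sub_distrib,
      ← Finset.sum_mul, hw₁, one_mul]
  have hS : ∑ i, w i * f i (x i - ∑ j, w j • x j) = ∑ i, ∑ j, w i * w j * f i (x i - x j) := by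
    simp only [hexp, Finset.mul_sum, mul_assoc]
  have hS' : ∑ i, ∑ j, w i * w j * f i (x i - x j) = ∑ i, ∑ j, w i * w j * f j (x j - x i) := by
    rw [Finset.sum_comm]
    exact Finset.sum_congr rfl fun _ _ => Finset.sum_congr rfl fun _ _ => by ring
  have h2S : 2 * ∑ i, w i * f i (x i - ∑ j, w j • x j)
      = ∑ i, ∑ j, w i * w j * (f i - f j) (x i - x j) := by
    rw [two_mul, hS]
    nth_rewrite 2 [hS']
    rw [← Finset.sum_add_distrib]
    refine Finset.sum_congr rfl fun i _ => ?_
    rw [← Finset.sum_add_distrib]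
    refine Finset.sum_congr rfl fun j _ => ?_
    simp only [LinearMap.sub_apply, map_sub]
    ring
  have hpos : 0 ≤ ∑ i, ∑ j, w i * w j * (f i - f j) (x i - x j) :=
    Finset.sum_nonneg fun i _ => Finset.sum_nonneg fun j _ =>
      mul_nonneg (mul_nonneg (hw₀ i) (hw₀ j)) (hf i j)
  linarith

theorem exists_clm_apply_sub_le_of_convex {E : Type*} [NormedAddCommGroup E] [NormedSpace ℝ E]
    {G : Set (E × ℝ)} (hG : Convex ℝ G) {y : E} {K : ℝ}
    (hK : y ∈ interior (Prod.fst '' (G ∩ {q | q.2 ≤ K}))) (hy : ∀ r, (y, r) ∈ G → 0 ≤ r) :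
    ∃ g : E →L[ℝ] ℝ, ∀ q ∈ G, g (q.1 - y) ≤ q.2 := by
  -- Separate the epigraph `O` of `G` from the ray below `(y, 0)`. As `O` contains all points high
  -- enough above a neighbourhood of `y`, the separating functional is not vertical (`α < 0`).
  set O : Set (E × ℝ) := G + ({(0 : E)} ×ˢ Ici (0 : ℝ))
  have hO : Convex ℝ O := hG.add ((convex_singleton 0).prod (convex_Ici 0))
  have hyO : (y, |K| + 1) ∈ interior O := by
    refine interior_maximal ?_ (isOpen_interior.prod isOpen_Ioi)
      ⟨hK, show K < |K| + 1 by linarith [le_abs_self K]⟩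
    rintro ⟨x, s⟩ ⟨hx, hs⟩
    obtain ⟨⟨x, r⟩, ⟨hxr, hrK⟩, rfl⟩ := interior_subset hx
    have hrs : r ≤ s := hrK.trans (le_of_lt hs)
    exact ⟨(x, r), hxr, (0, s - r), ⟨rfl, sub_nonneg.mpr hrs⟩, by simp⟩
  have hdisj : Disjoint (interior O) ({y} ×ˢ Iio 0) := by
    refine disjoint_left.mpr fun q hqO hq => ?_
    obtain ⟨a, ha, b, ⟨hb1, hb2⟩, rfl⟩ := interior_subset hqO
    obtain ⟨hq1, hq2⟩ := hq
    have hya : (y, a.2) = a := Prod.ext (by simp_all) rfl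
    have hnonneg := hy a.2 (hya ▸ ha)
    simp only [mem_singleton_iff, mem_Ici, mem_Iio, Prod.snd_add] at hb1 hb2 hq2
    linarith
  obtain ⟨f, u, hfO, hfy⟩ := geometric_hahn_banach_open hO.interior isOpen_interior
    ((convex_singleton y).prod (convex_Iio 0)) hdisj
  set φ : E →L[ℝ] ℝ := f.comp (ContinuousLinearMap.inl ℝ E ℝ)
  set α : ℝ := f (0, 1)
  have hf : ∀ x r, f (x, r) = φ x + r * α := fun x r => by
    rw [show ((x, r) : E × ℝ) = (x, 0) + r • (0, 1) by simp, map_add, map_smul, smul_eq_mul]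
    rfl
  have hα : α < 0 := by
    have h1 := hfO _ hyO
    have h2 := hfy (y, -1) ⟨rfl, by norm_num⟩
    rw [hf] at h1 h2
    nlinarith [abs_nonneg K]
  have hu : u ≤ φ y := by
    refine le_of_forall_pos_le_add fun ε hε => ?_
    have := hfy (y, ε / α) ⟨rfl, div_neg_of_pos_of_neg hε hα⟩
    rwa [hf, div_mul_cancel₀ _ hα.ne] at this
  refine ⟨(-α)⁻¹ • φ, fun q hq => ?_⟩
  have hqO : q ∈ closure (interior O) := by
    rw [hO.closure_interior_eq_closure_of_nonempty_interior ⟨_, hyO⟩]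
    exact subset_closure ⟨q, hq, 0, ⟨rfl, self_mem_Ici⟩, add_zero q⟩
  have hfq : f q ≤ u :=
    closure_lt_subset_le f.continuous continuous_const (closure_mono (fun a ha => hfO a ha) hqO)
  rw [show q = (q.1, q.2) from rfl, hf] at hfq
  rw [smul_apply, smul_eq_mul, map_sub, inv_mul_le_iff₀ (neg_pos.mpr hα)]
  linarith

section Operator

variable [NormedAddCommGroup X] [NormedSpace ℝ X] {A : Set (X × (X →L[ℝ] ℝ))}

theorem fitz_lt_top_iff {x : X} {x' : X →L[ℝ] ℝ} :
    fitz A x x' < ⊤ ↔ ∃ C : ℝ, ∀ a ∈ A, x' a.1 + a.2 x - a.2 a.1 ≤ C := by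
  constructor
  · intro h
    obtain ⟨C, hC, -⟩ := EReal.lt_iff_exists_real_btwn.mp h
    refine ⟨C, fun a ha => EReal.coe_le_coe_iff.mp ((le_iSup₂ (f := fun (a : X × (X →L[ℝ] ℝ))
      (_ : a ∈ A) => ((x' a.1 + a.2 x - a.2 a.1 : ℝ) : EReal)) a ha).trans hC.le)⟩
  · rintro ⟨C, hC⟩
    exact (iSup₂_le fun a ha => EReal.coe_le_coe_iff.mpr (hC a ha)).trans_lt (EReal.coe_lt_top C)

theorem fitz_lt_top_of_mem (hA : IsMonotoneOp A) {a : X × (X →L[ℝ] ℝ)} (ha : a ∈ A) :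
    fitz A a.1 a.2 < ⊤ :=
  fitz_lt_top_iff.mpr ⟨a.2 a.1, fun b hb => by
    have := hA a ha b hb
    simp only [sub_apply, map_sub] at this
    linarith⟩

theorem mem_closure_convexHull_opDom_of_fitz_lt_top (hA : IsMaxMonotoneOp A) {z : X}
    {u : X →L[ℝ] ℝ} (h : fitz A z u < ⊤) : z ∈ closure (convexHull ℝ (opDom A)) := by
  obtain ⟨C, hC⟩ := fitz_lt_top_iff.mp h
  by_contra hz
  obtain ⟨f, r, hfD, hrz⟩ :=
    geometric_hahn_banach_closed_point (convex_convexHull ℝ _).closure isClosed_closure hz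
  set t := |C - u z| / (f z - r)
  have ht : 0 ≤ t := div_nonneg (abs_nonneg _) (by linarith)
  have hts : t * (f z - r) = |C - u z| := div_mul_cancel₀ _ (by linarith)
  have hrel : MonRel (z, u + t • f) A := fun a ha => by
    have hfa : f a.1 < r := hfD _ (subset_closure (subset_convexHull ℝ _ ⟨a, ha, rfl⟩))
    have hexp : (u + t • f - a.2) (z - a.1)
        = u z - (u a.1 + a.2 z - a.2 a.1) + t * (f z - f a.1) := by
      simp only [sub_apply, add_apply, smul_apply, map_sub, smul_eq_mul]
      ring
    change 0 ≤ (u + t • f - a.2) (z - a.1)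
    nlinarith [hC a ha, le_abs_self (C - u z)]
  exact hz (subset_closure (subset_convexHull ℝ _ ⟨_, hA.2 _ hrel, rfl⟩))

def pairingGraph (A : Set (X × (X →L[ℝ] ℝ))) (y : X) : Set (X × ℝ) :=
  (fun b => (b.1, b.2 (b.1 - y))) '' A

theorem image_fst_convexHull_pairingGraph (A : Set (X × (X →L[ℝ] ℝ))) (y : X) :
    Prod.fst '' convexHull ℝ (pairingGraph A y) = convexHull ℝ (opDom A) := by
  rw [← LinearMap.coe_fst (R := ℝ) (M := X) (M₂ := ℝ), LinearMap.image_convexHull,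
    LinearMap.coe_fst, pairingGraph, image_image]
  rfl

theorem nonneg_of_mem_convexHull_pairingGraph (hA : IsMonotoneOp A) {y : X} {r : ℝ}
    (h : (y, r) ∈ convexHull ℝ (pairingGraph A y)) : 0 ≤ r := by
  obtain ⟨ι, _, w, z, hw₀, hw₁, hz, hsum⟩ := mem_convexHull_iff_exists_fintype.mp h
  choose b hbA hbz using hz
  have hy : ∑ i, w i • (b i).1 = y := by
    simpa [← hbz, Prod.fst_sum] using congrArg Prod.fst hsum
  have hr : ∑ i, w i * (b i).2 ((b i).1 - y) = r := by
    simpa [← hbz, Prod.snd_sum] using congrArg Prod.snd hsum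
  have := sum_mul_apply_sub_sum_smul_nonneg hw₀ hw₁ (x := fun i => (b i).1)
    (f := fun i => ((b i).2 : X →ₗ[ℝ] ℝ)) fun i j => hA _ (hbA i) _ (hbA j)
  rwa [← hr, ← hy]

theorem interior_convexHull_opDom_subset (hA : IsMaxMonotoneOp A) {c : X} {τ M : ℝ}
    (hτ : 0 < τ) (hball : ball c τ ⊆ opDom A) (hM : ∀ b ∈ A, b.1 ∈ ball c τ → ‖b.2‖ ≤ M) :
    interior (convexHull ℝ (opDom A)) ⊆ opDom A := by
  intro y hy
  set G := convexHull ℝ (pairingGraph A y)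
  -- `y` lies on the open segment from `c` to some `w = y + t • (y - c) ∈ conv (dom A)`; the heights
  -- of `G` are bounded over `ball c τ` and at `w`, hence, by convexity, over a neighbourhood of `y`.
  obtain ⟨t, hw, ht⟩ : ∃ t : ℝ, y + t • (y - c) ∈ convexHull ℝ (opDom A) ∧ 0 < t := by
    have hlim : Tendsto (fun t : ℝ => y + t • (y - c)) (𝓝 0) (𝓝 y) :=
      (continuous_const.add (continuous_id.smul continuous_const)).tendsto' 0 y (by simp)
    exact (((hlim.eventually (mem_interior_iff_mem_nhds.mp hy)).filter_mono
      (nhdsWithin_le_nhds (s := Ioi 0))).and self_mem_nhdsWithin).exists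
  rw [← image_fst_convexHull_pairingGraph A y] at hw
  obtain ⟨⟨w, r₀⟩, hwG, hw⟩ := hw
  set K := max (M * (τ + ‖c - y‖)) r₀
  set S := Prod.fst '' (G ∩ {q | q.2 ≤ K})
  have hS : Convex ℝ S := ((convex_convexHull ℝ _).inter
    (convex_halfSpace_le (LinearMap.snd ℝ X ℝ).isLinear K)).linear_image (LinearMap.fst ℝ X ℝ)
  have hM0 : 0 ≤ M := by
    obtain ⟨b, hb, hbc⟩ := hball (mem_ball_self hτ)
    exact (norm_nonneg _).trans (hM b hb (hbc ▸ mem_ball_self hτ))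
  have hballS : ball c τ ⊆ S := by
    intro x hx
    obtain ⟨b, hb, rfl⟩ := hball hx
    refine ⟨(b.1, b.2 (b.1 - y)), ⟨subset_convexHull ℝ _ ⟨b, hb, rfl⟩, ?_⟩, rfl⟩
    have hdist : ‖b.1 - y‖ ≤ τ + ‖c - y‖ := by
      calc ‖b.1 - y‖ ≤ ‖b.1 - c‖ + ‖c - y‖ := norm_sub_le_norm_sub_add_norm_sub _ _ _
        _ ≤ τ + ‖c - y‖ := by rw [← dist_eq_norm]; linarith [mem_ball.mp hx]
    calc b.2 (b.1 - y) ≤ ‖b.2‖ * ‖b.1 - y‖ := (le_abs_self _).trans (b.2.le_opNorm _)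
      _ ≤ M * (τ + ‖c - y‖) := mul_le_mul (hM b hb hx) hdist (norm_nonneg _) hM0
      _ ≤ K := le_max_left _ _
  have hyS : y ∈ interior S := by
    refine hS.openSegment_interior_self_subset_interior
      (interior_maximal hballS isOpen_ball (mem_ball_self hτ)) (y := w)
      ⟨(w, r₀), ⟨hwG, show r₀ ≤ K from le_max_right _ _⟩, rfl⟩
      ⟨t / (1 + t), 1 / (1 + t), by positivity, by positivity, by field_simp; ring, ?_⟩
    simp only at hw
    rw [hw]
    match_scalars <;> field_simp; ring
  obtain ⟨g, hg⟩ := exists_clm_apply_sub_le_of_convex (convex_convexHull ℝ _) hyS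
    fun r hr => nonneg_of_mem_convexHull_pairingGraph hA.1 hr
  refine ⟨(y, g), hA.2 _ fun b hb => ?_, rfl⟩
  have hgb := hg _ (subset_convexHull ℝ _ ⟨b, hb, rfl⟩)
  change 0 ≤ (g - b.2) (y - b.1)
  have hexp : (g - b.2) (y - b.1) = b.2 (b.1 - y) - g (b.1 - y) := by
    simp only [sub_apply, map_sub]
    ring
  simp only at hgb
  linarith

theorem exists_ball_norm_le [CompleteSpace X] (hA : IsMonotoneOp A)
    (hint : (interior (opDom A)).Nonempty) :
    ∃ (c : X) (τ M : ℝ), 0 < τ ∧ ball c τ ⊆ opDom A ∧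
      ∀ b ∈ A, b.1 ∈ ball c τ → ‖b.2‖ ≤ M := by
  obtain ⟨c₀, hc₀⟩ := hint
  obtain ⟨δ, hδ, hδD⟩ := Metric.isOpen_iff.mp isOpen_interior c₀ hc₀
  set C : ℕ → Set X := fun n => {x | ∀ b ∈ A, b.1 ∈ ball c₀ δ → b.2 (x - b.1) ≤ n}
  have hC : ∀ n, IsClosed (C n) := fun n => by
    simp only [C, ofPred_forall]
    exact isClosed_iInter fun b => isClosed_iInter fun _ => isClosed_iInter fun _ =>
      isClosed_le (by fun_prop) continuous_const
  have hcover : ball c₀ δ ⊆ ⋃ n, C n := by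
    intro x hx
    obtain ⟨q, hq, rfl⟩ := interior_subset (hδD hx)
    refine mem_iUnion.mpr ⟨⌈‖q.2‖ * (2 * δ)⌉₊, fun b hb hbδ => ?_⟩
    have hmono := hA q hq b hb
    rw [sub_apply] at hmono
    calc b.2 (q.1 - b.1) ≤ q.2 (q.1 - b.1) := by linarith
      _ ≤ ‖q.2‖ * ‖q.1 - b.1‖ := (le_abs_self _).trans (q.2.le_opNorm _)
      _ ≤ ‖q.2‖ * (2 * δ) := by
        gcongr
        rw [← dist_eq_norm]
        linarith [dist_triangle_right q.1 b.1 c₀, mem_ball.mp hx, mem_ball.mp hbδ]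
      _ ≤ _ := Nat.le_ceil _
  obtain ⟨n, x₁, hx₁C, hx₁δ⟩ := exists_interior_inter_nonempty_of_subset_iUnion isOpen_ball
    ⟨c₀, mem_ball_self hδ⟩ hC hcover
  obtain ⟨ρ, hρ, hρC⟩ : ∃ ρ > 0, ball x₁ ρ ⊆ C n ∩ ball c₀ δ := Metric.mem_nhds_iff.mp
    (inter_mem (mem_interior_iff_mem_nhds.mp hx₁C) (isOpen_ball.mem_nhds hx₁δ))
  have hhalf : ball x₁ (ρ / 2) ⊆ ball x₁ ρ := ball_subset_ball (by linarith)
  refine ⟨x₁, ρ / 2, n / (ρ / 2), by positivity,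
    fun x hx => interior_subset (hδD (hρC (hhalf hx)).2), fun b hb hbx => ?_⟩
  have hle : ∀ v : X, ‖v‖ ≤ ρ / 2 → b.2 v ≤ n := fun v hv => by
    have hmem : b.1 + v ∈ ball x₁ ρ := by
      rw [mem_ball, dist_eq_norm, add_sub_right_comm]
      linarith [norm_add_le (b.1 - x₁) v, mem_ball_iff_norm.mp hbx]
    simpa using (hρC hmem).1 b hb (hρC (hhalf hbx)).2
  refine ContinuousLinearMap.opNorm_bound_of_ball_bound (half_pos hρ) _ _ fun v hv => ?_
  rw [mem_closedBall_zero_iff] at hv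
  have hneg := hle (-v) (by rwa [norm_neg])
  rw [map_neg] at hneg
  exact abs_le.mpr ⟨by linarith, hle v hv⟩

end Operator

/-- Corollary: if `A` is maximally monotone with `int(dom A) ≠ ∅`, then
`cl(dom A) = cl(conv(dom A)) = cl(P_X[dom F_A])`; in particular `dom A` is nearly
convex. -/
theorem nearly_convex_of_interior_nonempty
    [NormedAddCommGroup X] [NormedSpace ℝ X] [CompleteSpace X]
    (A : Set (X × (X →L[ℝ] ℝ))) (hA : IsMaxMonotoneOp A)
    (hint : (interior (opDom A)).Nonempty) :
    closure (opDom A) = closure (convexHull ℝ (opDom A)) ∧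
    closure (opDom A) = closure (Prod.fst '' fitzDom A) ∧
    Convex ℝ (closure (opDom A)) := by
  obtain ⟨c, τ, M, hτ, hball, hM⟩ := exists_ball_norm_le hA.1 hint
  have hsub := interior_convexHull_opDom_subset hA hτ hball hM
  have hne : (interior (convexHull ℝ (opDom A))).Nonempty :=
    hint.mono (interior_mono (subset_convexHull ℝ _))
  have hhull : closure (opDom A) = closure (convexHull ℝ (opDom A)) := by
    refine (closure_mono (subset_convexHull ℝ _)).antisymm ?_
    rw [← (convex_convexHull ℝ _).closure_interior_eq_closure_of_nonempty_interior hne]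
    exact closure_mono hsub
  have hfitz : closure (opDom A) = closure (Prod.fst '' fitzDom A) := by
    refine (closure_mono ?_).antisymm (closure_minimal ?_ isClosed_closure)
    · rintro _ ⟨a, ha, rfl⟩
      exact ⟨a, fitz_lt_top_of_mem hA.1 ha, rfl⟩
    · rintro _ ⟨q, hq, rfl⟩
      rw [hhull]
      exact mem_closure_convexHull_opDom_of_fitz_lt_top hA hq
  exact ⟨hhull, hfitz, hhull ▸ (convex_convexHull ℝ _).closure⟩
end
end

section
/- Let X be a real Banach space, B : X ⇉ X* a maximally monotone operator, z ∈ X, and suppose there exist δ > 0 and y₀* ∈ X* with ‖y₀*‖ = 1 such that ⟨y₀*, z − b⟩ > δ for all b ∈ dom B. Then for every n ∈ ℕ there exists (bₙ, bₙ*) ∈ gra B with ⟨z − bₙ, bₙ*⟩ > nδ; consequently F_B(z,0) = +∞. -/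
open Set

noncomputable section

variable {X : Type*}

/-! If `⟨z − b, b*⟩ ≤ nδ` held on all of `gra B`, the separation `⟨y₀*, z − b⟩ > δ` would make
`(z, n y₀*)` monotonically related to `B`; maximality would then put `z` in `dom B`, where the
separation fails at `b = z`. Unboundedness of `⟨z − b, b*⟩` is exactly `F_B(z, 0) = +∞`. -/

section

variable [NormedAddCommGroup X] [NormedSpace ℝ X] {A : Set (X × (X →L[ℝ] ℝ))}

theorem IsMaxMonotoneOp.exists_lt_apply_sub (hA : IsMaxMonotoneOp A) {x : X} (hx : x ∉ opDom A)
    (x' : X →L[ℝ] ℝ) : ∃ a ∈ A, x' (x - a.1) < a.2 (x - a.1) := by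
  by_contra! h
  refine hx ⟨(x, x'), hA.2 _ fun a ha => ?_, rfl⟩
  simpa [sub_nonneg] using h a ha

theorem coe_le_fitz_s14 {a : X × (X →L[ℝ] ℝ)} (ha : a ∈ A) (x : X) (x' : X →L[ℝ] ℝ) :
    ((x' a.1 + a.2 x - a.2 a.1 : ℝ) : EReal) ≤ fitz A x x' :=
  le_iSup₂ (f := fun a (_ : a ∈ A) => ((x' a.1 + a.2 x - a.2 a.1 : ℝ) : EReal)) a ha

theorem fitz_zero_eq_top_of_unbounded {x : X} (h : ∀ r : ℝ, ∃ a ∈ A, r < a.2 (x - a.1)) :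
    fitz A x 0 = ⊤ := by
  refine EReal.eq_top_iff_forall_lt _ |>.2 fun r => ?_
  obtain ⟨a, ha, hr⟩ := h r
  calc (r : EReal) < ((0 : X →L[ℝ] ℝ) a.1 + a.2 x - a.2 a.1 : ℝ) :=
        EReal.coe_lt_coe_iff.2 (by simpa [map_sub] using hr)
    _ ≤ fitz A x 0 := coe_le_fitz_s14 ha x 0

end

theorem fitz_eq_top_of_separation_general
    [NormedAddCommGroup X] [NormedSpace ℝ X]
    (B : Set (X × (X →L[ℝ] ℝ))) (hB : IsMaxMonotoneOp B) (z : X)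
    (δ : ℝ) (hδ : 0 < δ) (y0 : X →L[ℝ] ℝ)
    (hsep : ∀ b ∈ opDom B, δ < y0 (z - b)) :
    (∀ n : ℕ, ∃ b ∈ B, (n : ℝ) * δ < b.2 (z - b.1)) ∧ fitz B z 0 = ⊤ := by
  have hz : z ∉ opDom B := fun hzB => by simpa using (hδ.trans (hsep z hzB)).ne'
  have large : ∀ n : ℕ, ∃ b ∈ B, (n : ℝ) * δ < b.2 (z - b.1) := by
    intro n
    obtain ⟨b, hb, hlt⟩ := hB.exists_lt_apply_sub hz ((n : ℝ) • y0)
    refine ⟨b, hb, lt_of_le_of_lt ?_ hlt⟩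
    simpa using mul_le_mul_of_nonneg_left (hsep b.1 ⟨b, hb, rfl⟩).le n.cast_nonneg
  refine ⟨large, fitz_zero_eq_top_of_unbounded fun r => ?_⟩
  obtain ⟨n, hn⟩ := exists_lt_nsmul hδ r
  obtain ⟨b, hb, hlt⟩ := large n
  exact ⟨b, hb, (nsmul_eq_mul n δ ▸ hn).trans hlt⟩

/-- Lemma: if `B` is maximally monotone and a norm-one functional `y₀*` separates `z`
from `dom B` with margin `δ > 0`, then for every `n ∈ ℕ` there is `(bₙ, bₙ*) ∈ gra B`
with `⟨z − bₙ, bₙ*⟩ > nδ`; consequently `F_B(z, 0) = +∞`. -/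
theorem fitz_eq_top_of_separation
    [NormedAddCommGroup X] [NormedSpace ℝ X] [CompleteSpace X]
    (B : Set (X × (X →L[ℝ] ℝ))) (hB : IsMaxMonotoneOp B) (z : X)
    (δ : ℝ) (hδ : 0 < δ) (y0 : X →L[ℝ] ℝ) (hy0 : ‖y0‖ = 1)
    (hsep : ∀ b ∈ opDom B, δ < y0 (z - b)) :
    (∀ n : ℕ, ∃ b ∈ B, (n : ℝ) * δ < b.2 (z - b.1)) ∧ fitz B z 0 = ⊤ :=
  fitz_eq_top_of_separation_general B hB z δ hδ y0 hsep
end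
end

section
/- Let X be a real Banach space, 1 ≤ p < ∞, A : X ⇉ X* an operator with nonempty graph, and z ∈ X with α := dist(z, dom A) > 0. Suppose for every sufficiently large λ > 0 the pair (z,0) is not monotonically related to the graph of A + λ J_p(· − z). Then sup_{(a,a*)∈gra A} ⟨z − a, a*⟩/‖z − a‖ = +∞. -/
open Set

noncomputable section

variable {X : Type*}

/-! Testing the subgradient inequality of `b* ∈ J_p(x − z)` at the origin gives
`⟨x − z, b*⟩ ≥ ‖x − z‖^p / p`, so a pair of `gra (A + λ J_p(· − z))` not monotonically
related to `(z, 0)` yields `(a, a*) ∈ gra A` with `⟨z − a, a*⟩ > λ ‖z − a‖^p / p`.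
Dividing by `‖z − a‖ ≥ α` gives `⟨z − a, a*⟩ / ‖z − a‖ > λ α^(p−1) / p`, which is
unbounded in `λ` since `p ≥ 1`. -/

section

variable [NormedAddCommGroup X] [NormedSpace ℝ X]

theorem norm_rpow_div_le_apply_of_mem_Jmap {p : ℝ} (hp : 0 < p) {x : X} {b' : X →L[ℝ] ℝ}
    (hb : b' ∈ Jmap p x) : ‖x‖ ^ p / p ≤ b' x := by
  have h0 := hb 0
  rw [norm_zero, Real.zero_rpow hp.ne', zero_div, zero_sub, map_neg] at h0
  linarith

theorem infDist_opDom_le_norm_sub (A : Set (X × (X →L[ℝ] ℝ))) (z : X) {a : X × (X →L[ℝ] ℝ)}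
    (ha : a ∈ A) : Metric.infDist z (opDom A) ≤ ‖z - a.1‖ :=
  dist_eq_norm z a.1 ▸ Metric.infDist_le_dist_of_mem ⟨a, ha, rfl⟩

theorem exists_mem_mul_rpow_lt_of_not_monRel_sumGraph {p lam : ℝ} (hp : 0 < p) (hlam : 0 ≤ lam)
    {A : Set (X × (X →L[ℝ] ℝ))} {z : X} (h : ¬ MonRel (z, 0) (sumGraph A lam p z)) :
    ∃ a ∈ A, lam * (‖z - a.1‖ ^ p / p) < a.2 (z - a.1) := by
  simp only [MonRel, not_forall, not_le] at h
  obtain ⟨q, ⟨a', b', ha, hb, hq⟩, hneg⟩ := h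
  refine ⟨(q.1, a'), ha, ?_⟩
  have hJ : ‖z - q.1‖ ^ p / p ≤ -b' (z - q.1) := by
    rw [← map_neg, neg_sub, norm_sub_rev]
    exact norm_rpow_div_le_apply_of_mem_Jmap hp hb
  have hsum : 0 < a' (z - q.1) + lam * b' (z - q.1) := by
    rw [hq] at hneg
    simp only [sub_apply, zero_apply, add_apply, smul_apply, smul_eq_mul] at hneg
    linarith
  linarith [mul_le_mul_of_nonneg_left hJ hlam]

theorem mul_rpow_sub_one_div_lt_div {p lam α r c : ℝ} (hp : 1 ≤ p) (hlam : 0 ≤ lam)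
    (hα : 0 < α) (hαr : α ≤ r) (h : lam * (r ^ p / p) < c) :
    lam * α ^ (p - 1) / p < c / r := by
  have hr : 0 < r := hα.trans_le hαr
  have hpow : α ^ (p - 1) ≤ r ^ (p - 1) := Real.rpow_le_rpow hα.le hαr (by linarith)
  calc lam * α ^ (p - 1) / p ≤ lam * r ^ (p - 1) / p := by gcongr
    _ = lam * (r ^ p / p) / r := by
      rw [Real.rpow_sub hr, Real.rpow_one]
      field_simp
    _ < c / r := div_lt_div_of_pos_right h hr

end

theorem sup_unbounded_of_not_monRel_general
    [NormedAddCommGroup X] [NormedSpace ℝ X]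
    (p : ℝ) (hp : 1 ≤ p)
    (A : Set (X × (X →L[ℝ] ℝ))) (z : X)
    (hdist : 0 < Metric.infDist z (opDom A))
    (h : ∃ Λ : ℝ, 0 < Λ ∧ ∀ lam : ℝ, Λ ≤ lam →
      ¬ MonRel (z, (0 : X →L[ℝ] ℝ)) (sumGraph A lam p z)) :
    ∀ M : ℝ, ∃ a ∈ A, M < a.2 (z - a.1) / ‖z - a.1‖ := by
  obtain ⟨Λ, hΛ, hnot⟩ := h
  intro M
  set α := Metric.infDist z (opDom A)
  have hp0 : 0 < p := by linarith
  have hαpow : 0 < α ^ (p - 1) := Real.rpow_pos_of_pos hdist _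
  set lam := max Λ (p * M / α ^ (p - 1))
  have hlam : 0 ≤ lam := hΛ.le.trans (le_max_left _ _)
  have hM : M ≤ lam * α ^ (p - 1) / p := by
    have := le_max_right Λ (p * M / α ^ (p - 1))
    rw [div_le_iff₀ hαpow] at this
    rw [le_div_iff₀ hp0]
    linarith
  obtain ⟨a, ha, hlt⟩ :=
    exists_mem_mul_rpow_lt_of_not_monRel_sumGraph hp0 hlam (hnot lam (le_max_left _ _))
  exact ⟨a, ha, hM.trans_lt
    (mul_rpow_sub_one_div_lt_div hp hlam hdist (infDist_opDom_le_norm_sub A z ha) hlt)⟩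

/-- Lemma: if `α := dist(z, dom A) > 0` and for all sufficiently large `λ > 0` the
pair `(z, 0)` is not monotonically related to `gra (A + λ J_p(· − z))`, then
`sup_{(a,a*)∈gra A} ⟨z − a, a*⟩/‖z − a‖ = +∞`. -/
theorem sup_unbounded_of_not_monRel
    [NormedAddCommGroup X] [NormedSpace ℝ X] [CompleteSpace X]
    (p : ℝ) (hp : 1 ≤ p)
    (A : Set (X × (X →L[ℝ] ℝ))) (hne : A.Nonempty) (z : X)
    (hdist : 0 < Metric.infDist z (opDom A))
    (h : ∃ Λ : ℝ, 0 < Λ ∧ ∀ lam : ℝ, Λ ≤ lam →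
      ¬ MonRel (z, (0 : X →L[ℝ] ℝ)) (sumGraph A lam p z)) :
    ∀ M : ℝ, ∃ a ∈ A, M < a.2 (z - a.1) / ‖z - a.1‖ :=
  sup_unbounded_of_not_monRel_general p hp A z hdist h
end
end

section
/- Let X be a real Banach space and A : X ⇉ X* a monotone operator with nonempty graph. If (z,z*) ∈ dom F_A and dist(z, dom A) > 0, then sup_{(a,a*)∈gra A} ⟨z − a, a*⟩/‖z − a‖ ≤ ‖z*‖ − r < +∞ for some r ∈ ℝ; in particular the supremum sup_{(a,a*)∈gra A} ⟨z − a, a*⟩/‖z − a‖ is finite. -/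
/-!
Each `(a, a*) ∈ gra A` is a test pair in the supremum defining `F_A(z, z*)`, which gives
`⟨z − a, a*⟩ ≤ F_A(z, z*) − ⟨z, z*⟩ + ‖z*‖ ‖z − a‖`. Dividing by `‖z − a‖ ≥ dist(z, dom A) > 0`
bounds the quotient by `‖z*‖ + max(F_A(z, z*) − ⟨z, z*⟩, 0) / dist(z, dom A)`.
-/

open Set

noncomputable section

variable {X : Type*}

theorem le_toReal_fitz_of_mem_fitzDom [NormedAddCommGroup X] [NormedSpace ℝ X]
    {A : Set (X × (X →L[ℝ] ℝ))} {z : X} {z' : X →L[ℝ] ℝ} (hdom : (z, z') ∈ fitzDom A)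
    {a : X × (X →L[ℝ] ℝ)} (ha : a ∈ A) :
    z' a.1 + a.2 z - a.2 a.1 ≤ (fitz A z z').toReal := by
  have h : ((z' a.1 + a.2 z - a.2 a.1 : ℝ) : EReal) ≤ fitz A z z' := le_iSup₂_of_le a ha le_rfl
  exact_mod_cast h.trans (EReal.le_coe_toReal hdom.ne)

theorem apply_sub_le_of_mem_fitzDom [NormedAddCommGroup X] [NormedSpace ℝ X]
    {A : Set (X × (X →L[ℝ] ℝ))} {z : X} {z' : X →L[ℝ] ℝ} (hdom : (z, z') ∈ fitzDom A)
    {a : X × (X →L[ℝ] ℝ)} (ha : a ∈ A) :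
    a.2 (z - a.1) ≤ (fitz A z z').toReal - z' z + ‖z'‖ * ‖z - a.1‖ := by
  have hfitz := le_toReal_fitz_of_mem_fitzDom hdom ha
  have hz' : z' (z - a.1) ≤ ‖z'‖ * ‖z - a.1‖ := (le_abs_self _).trans (z'.le_opNorm _)
  rw [map_sub] at hz' ⊢
  linarith

theorem div_le_add_of_le_add_mul {x c k t d : ℝ} (hd : 0 < d) (hdt : d ≤ t)
    (h : x ≤ c + k * t) : x / t ≤ k + max c 0 / d := by
  have hc : c ≤ max c 0 / d * t := by
    calc c ≤ max c 0 := le_max_left c 0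
      _ = max c 0 / d * d := (div_mul_cancel₀ _ hd.ne').symm
      _ ≤ max c 0 / d * t := by gcongr
  rw [div_le_iff₀ (hd.trans_le hdt)]
  linarith

theorem sup_bounded_of_mem_fitzDom_general
    [NormedAddCommGroup X] [NormedSpace ℝ X]
    (A : Set (X × (X →L[ℝ] ℝ)))
    (z : X) (z' : X →L[ℝ] ℝ) (hdom : (z, z') ∈ fitzDom A)
    (hdist : 0 < Metric.infDist z (opDom A)) :
    ∃ r : ℝ, ∀ a ∈ A, a.2 (z - a.1) / ‖z - a.1‖ ≤ ‖z'‖ - r := by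
  refine ⟨-(max ((fitz A z z').toReal - z' z) 0 / Metric.infDist z (opDom A)), fun a ha => ?_⟩
  have hnear : Metric.infDist z (opDom A) ≤ ‖z - a.1‖ := by
    rw [← dist_eq_norm]
    exact Metric.infDist_le_dist_of_mem ⟨a, ha, rfl⟩
  rw [sub_neg_eq_add]
  exact div_le_add_of_le_add_mul hdist hnear (apply_sub_le_of_mem_fitzDom hdom ha)

/-- Lemma: if `A` is monotone with nonempty graph, `(z, z*) ∈ dom F_A` and
`dist(z, dom A) > 0`, then there is `r ∈ ℝ` with
`sup_{(a,a*)∈gra A} ⟨z − a, a*⟩/‖z − a‖ ≤ ‖z*‖ − r < +∞`; in particular this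
supremum is finite. -/
theorem sup_bounded_of_mem_fitzDom
    [NormedAddCommGroup X] [NormedSpace ℝ X] [CompleteSpace X]
    (A : Set (X × (X →L[ℝ] ℝ))) (hne : A.Nonempty) (hmono : IsMonotoneOp A)
    (z : X) (z' : X →L[ℝ] ℝ) (hdom : (z, z') ∈ fitzDom A)
    (hdist : 0 < Metric.infDist z (opDom A)) :
    ∃ r : ℝ, ∀ a ∈ A, a.2 (z - a.1) / ‖z - a.1‖ ≤ ‖z'‖ - r :=
  sup_bounded_of_mem_fitzDom_general A z z' hdom hdist
end
end
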